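/- Let k be a commutative ring, G a finite group, and C = FI_G. For every n ≥ 1, the shifted free module S(kC e_n) is isomorphic, as a C-module, to the direct sum kC e_n ⊕ (kC e_{n-1})^{⊕ n·|G|}, where |G| is the order of G. (In particular, S(kC e_n) is a projective C-module generated in degrees ≤ n, i.e., ι is a genetic functor.) -/

import Mathlib

open CategoryTheory CategoryTheory.Limits

attribute [local instance] CategoryTheory.Abelian.hasFiniteBiproducts

/-- Objects of the category `FI_G`: natural numbers (bundled). -/
structure FIG (G : Type) where
  n : ℕ

variable {G : Type}

/-- The category `FI_G`: a morphism `X ⟶ Y` is a pair `(f, c)` where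
`f : Fin X.n ↪ Fin Y.n` is an injective map and `c : Fin X.n → G` is arbitrary,
with composition `(f₂,c₂) ∘ (f₁,c₁) = (f₂ ∘ f₁, t ↦ c₂(f₁ t) * c₁ t)`. -/
instance FIG.category [Group G] : Category (FIG G) where
  Hom X Y := (Fin X.n ↪ Fin Y.n) × (Fin X.n → G)
  id X := ⟨Function.Embedding.refl _, fun _ => 1⟩
  comp f g := ⟨f.1.trans g.1, fun t => g.2 (f.1 t) * f.2 t⟩
  id_comp f := Prod.ext rfl (funext fun t => mul_one _)
  comp_id f := Prod.ext rfl (funext fun t => one_mul _)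
  assoc f g h := by
    refine Prod.ext rfl ?_
    funext t
    dsimp
    rw [mul_assoc]
    rfl

/-- The free `FI_G`-module `kC e_n`, sending `m` to the free `k`-module
on the hom-set `FI_G(n, m)`. -/
noncomputable def FIG.free (k : Type) [CommRing k] (G : Type) [Group G] (n : ℕ) :
    FIG G ⥤ ModuleCat k :=
  coyoneda.obj (Opposite.op ⟨n⟩) ⋙ ModuleCat.free k

/-- An `FI_G`-module is finitely generated if it admits an epimorphism from a
finite direct sum `⨁ᵢ kC e_{nᵢ}` of free modules. -/
noncomputable def FIG.FinGen (k : Type) [CommRing k] [Group G]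
    (V : FIG G ⥤ ModuleCat k) : Prop :=
  ∃ (r : ℕ) (a : Fin r → ℕ) (p : (⨁ fun i : Fin r => FIG.free k G (a i)) ⟶ V), Epi p

/-- An `FI_G`-module `V` is finite dimensional if each `V(m)` is a
finite-dimensional `k`-vector space and `V(m) = 0` for all but finitely many `m`. -/
def FIG.FinDim (k : Type) [Field k] [Group G] (V : FIG G ⥤ ModuleCat k) : Prop :=
  (∀ X : FIG G, Module.Finite k (V.obj X)) ∧
    ∃ N : ℕ, ∀ X : FIG G, N < X.n → IsZero (V.obj X)

/-- An `FI_G`-module `F` is torsion-free if `Hom(T, F) = 0` for every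
finite-dimensional `FI_G`-module `T`. -/
def FIG.TorsionFree (k : Type) [Field k] [Group G] (F : FIG G ⥤ ModuleCat k) : Prop :=
  ∀ T : FIG G ⥤ ModuleCat k, FIG.FinDim k T → ∀ f : T ⟶ F, f = 0

/-- Extension of an injection `f : Fin m ↪ Fin n` to `Fin (m+1) ↪ Fin (n+1)`,
sending `0 ↦ 0` and `t + 1 ↦ f t + 1`. -/
def FIG.extEmb {m n : ℕ} (f : Fin m ↪ Fin n) : Fin (m + 1) ↪ Fin (n + 1) where
  toFun := Fin.cons 0 (fun t => (f t).succ)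
  inj' := by
    intro a b h
    induction a using Fin.cases with
    | zero =>
      induction b using Fin.cases with
      | zero => rfl
      | succ j =>
        simp only [Fin.cons_zero, Fin.cons_succ] at h
        exact absurd h.symm (Fin.succ_ne_zero _)
    | succ i =>
      induction b using Fin.cases with
      | zero =>
        simp only [Fin.cons_zero, Fin.cons_succ] at h
        exact absurd h (Fin.succ_ne_zero _)
      | succ j =>
        simp only [Fin.cons_succ] at h
        exact congrArg Fin.succ (f.injective (Fin.succ_injective _ h))

/-- The functor `ι : FI_G → FI_G`, `ι(n) = 1 ⊙ n`: on objects `n ↦ n + 1`, and on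
a morphism `(f, c)` it gives `(f', c')` with `f' 0 = 0`, `c' 0 = 1`,
`f' (t+1) = f t + 1` and `c' (t+1) = c t`. -/
def FIG.iota (G : Type) [Group G] : FIG G ⥤ FIG G where
  obj X := ⟨X.n + 1⟩
  map f := ⟨FIG.extEmb f.1, Fin.cons 1 f.2⟩
  map_id X := by
    refine Prod.ext (DFunLike.ext _ _ fun t => ?_) (funext fun t => ?_) <;>
      induction t using Fin.cases <;> rfl
  map_comp {X Y Z} f g := by
    refine Prod.ext (DFunLike.ext _ _ fun t => ?_) (funext fun t => ?_) <;>
      induction t using Fin.cases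
    · rfl
    · rfl
    · exact (one_mul 1).symm
    · rfl

/-- The shift functor `S : V ↦ V ∘ ι` on `FI_G`-modules. -/
def FIG.S (k : Type) [CommRing k] (G : Type) [Group G] :
    (FIG G ⥤ ModuleCat k) ⥤ (FIG G ⥤ ModuleCat k) :=
  (Functor.whiskeringLeft (FIG G) (FIG G) (ModuleCat k)).obj (FIG.iota G)

/-! Every morphism `φ : n + 1 ⟶ ι X` of `FI_G` either misses `0`, and then factors uniquely
as `ι ψ` after the shift `t ↦ t + 1`, with `ψ : n + 1 ⟶ X`; or it sends exactly one `i` to `0`,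
with some colour `g`, and then factors uniquely as `ι ψ` after a fixed morphism `n + 1 ⟶ ι n`
depending on `(i, g)`, with `ψ : n ⟶ X`. So `Hom(n + 1, ι -)` is a coproduct of
`1 + (n + 1)·|G|` representable functors. Linearization is a left adjoint, hence preserves this
coproduct, and finite coproducts of `FI_G`-modules are biproducts. -/

section

variable {C : Type*} [Category* C] [HasZeroMorphisms C] {J : Type*} {f : Option J → C}
  [HasBiproduct fun j => f (some j)] [HasBinaryBiproduct (f none) (⨁ fun j => f (some j))]

noncomputable def isColimitCofanOptionBiprod :
    IsColimit (Cofan.mk (f none ⊞ ⨁ fun j => f (some j)) fun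
      | none => biprod.inl
      | some j => biproduct.ι (fun j => f (some j)) j ≫ biprod.inr) :=
  Cofan.IsColimit.mk _
    (fun s => biprod.desc (s.inj none) (biproduct.desc fun j => s.inj (some j)))
    (by rintro s (_ | j) <;> simp)
    (fun s m hm => biprod.hom_ext' _ _ (by simpa using hm none)
      (biproduct.hom_ext' _ _ fun j => by simpa using hm (some j)))

noncomputable def isoBiprodOfIsColimitCofanOption {P : C} {p : ∀ o, f o ⟶ P}
    (hc : IsColimit (Cofan.mk P p)) : P ≅ f none ⊞ ⨁ fun j => f (some j) :=
  hc.coconePointUniqueUpToIso isColimitCofanOptionBiprod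

end

noncomputable def isColimitCofanMkOfBijective {C : Type*} [Category* C] {I : Type}
    {F : C ⥤ Type} {f : I → C ⥤ Type} (p : ∀ i, f i ⟶ F)
    (hp : ∀ X, Function.Bijective fun x : Σ i, (f i).obj X => (p x.1).app X x.2) :
    IsColimit (Cofan.mk F p) :=
  evaluationJointlyReflectsColimits _ fun X =>
    (isColimitMapCoconeCofanMkEquiv ((evaluation C Type).obj X) f p).symm
      (Classical.choice ((Cofan.nonempty_isColimit_iff_bijective_fromSigma _).mpr (hp X)))

namespace FIG

variable [Group G]

lemma hom_ext {X Y : FIG G} {φ φ' : X ⟶ Y} (h₁ : ∀ t, φ.1 t = φ'.1 t)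
    (h₂ : ∀ t, φ.2 t = φ'.2 t) : φ = φ' :=
  Prod.ext (DFunLike.ext _ _ h₁) (funext h₂)

lemma comp_fst {X Y Z : FIG G} (φ : X ⟶ Y) (ψ : Y ⟶ Z) (t : Fin X.n) :
    (φ ≫ ψ).1 t = ψ.1 (φ.1 t) := rfl

lemma comp_snd {X Y Z : FIG G} (φ : X ⟶ Y) (ψ : Y ⟶ Z) (t : Fin X.n) :
    (φ ≫ ψ).2 t = ψ.2 (φ.1 t) * φ.2 t := rfl

-- `((iota G).obj X).n` is `X.n + 1` only after unfolding, so numerals need an explicit type.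
lemma iota_map_fst_zero {X Y : FIG G} (h : X ⟶ Y) :
    ((iota G).map h).1 (0 : Fin (X.n + 1)) = (0 : Fin (Y.n + 1)) := rfl

lemma iota_map_snd_zero {X Y : FIG G} (h : X ⟶ Y) :
    ((iota G).map h).2 (0 : Fin (X.n + 1)) = 1 := rfl

lemma iota_map_fst_succ {X Y : FIG G} (h : X ⟶ Y) (t : Fin X.n) :
    ((iota G).map h).1 t.succ = (h.1 t).succ := rfl

lemma iota_map_snd_succ {X Y : FIG G} (h : X ⟶ Y) (t : Fin X.n) :
    ((iota G).map h).2 t.succ = h.2 t := rfl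

def succHom (n : ℕ) : (⟨n⟩ : FIG G) ⟶ (iota G).obj ⟨n⟩ :=
  (⟨Fin.succEmb n, 1⟩ : (Fin n ↪ Fin (n + 1)) × (Fin n → G))

def succAboveHom {n : ℕ} (i : Fin (n + 1)) : (⟨n⟩ : FIG G) ⟶ ⟨n + 1⟩ :=
  (⟨i.succAboveEmb, 1⟩ : (Fin n ↪ Fin (n + 1)) × (Fin n → G))

/-- `i.cycleRange` sends `i` to `0` and `i.succAbove t` to `t.succ`. -/
def insertHom {n : ℕ} (i : Fin (n + 1)) (g : G) : (⟨n + 1⟩ : FIG G) ⟶ (iota G).obj ⟨n⟩ :=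
  (⟨i.cycleRange.toEmbedding, Pi.mulSingle i g⟩ :
    (Fin (n + 1) ↪ Fin (n + 1)) × (Fin (n + 1) → G))

variable {X : FIG G} {n : ℕ}

lemma succHom_comp_fst (ψ : (⟨n⟩ : FIG G) ⟶ X) (t : Fin n) :
    (succHom n ≫ (iota G).map ψ).1 t = (ψ.1 t).succ := rfl

lemma succHom_comp_snd (ψ : (⟨n⟩ : FIG G) ⟶ X) (t : Fin n) :
    (succHom n ≫ (iota G).map ψ).2 t = ψ.2 t := mul_one _

lemma succAboveHom_comp_fst {Y : FIG G} (i : Fin (n + 1)) (φ : (⟨n + 1⟩ : FIG G) ⟶ Y)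
    (t : Fin n) : (succAboveHom i ≫ φ).1 t = φ.1 (i.succAbove t) := rfl

lemma succAboveHom_comp_snd {Y : FIG G} (i : Fin (n + 1)) (φ : (⟨n + 1⟩ : FIG G) ⟶ Y)
    (t : Fin n) : (succAboveHom i ≫ φ).2 t = φ.2 (i.succAbove t) := mul_one _

lemma insertHom_fst (i : Fin (n + 1)) (g : G) (x : Fin (n + 1)) :
    (insertHom i g).1 x = i.cycleRange x := rfl

lemma insertHom_snd (i : Fin (n + 1)) (g : G) (x : Fin (n + 1)) :
    (insertHom i g).2 x = Pi.mulSingle (M := fun _ => G) i g x := rfl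

lemma insertHom_comp_fst_self (i : Fin (n + 1)) (g : G) (ψ : (⟨n⟩ : FIG G) ⟶ X) :
    (insertHom i g ≫ (iota G).map ψ).1 i = (0 : Fin (X.n + 1)) := by
  rw [comp_fst, insertHom_fst, Fin.cycleRange_self, iota_map_fst_zero]

lemma insertHom_comp_fst_succAbove (i : Fin (n + 1)) (g : G) (ψ : (⟨n⟩ : FIG G) ⟶ X)
    (t : Fin n) : (insertHom i g ≫ (iota G).map ψ).1 (i.succAbove t) = (ψ.1 t).succ := by
  rw [comp_fst, insertHom_fst, Fin.cycleRange_succAbove, iota_map_fst_succ]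

lemma insertHom_comp_snd_self (i : Fin (n + 1)) (g : G) (ψ : (⟨n⟩ : FIG G) ⟶ X) :
    (insertHom i g ≫ (iota G).map ψ).2 i = g := by
  rw [comp_snd, insertHom_fst, insertHom_snd, Fin.cycleRange_self, iota_map_snd_zero,
    Pi.mulSingle_eq_same, one_mul]

lemma insertHom_comp_snd_succAbove (i : Fin (n + 1)) (g : G) (ψ : (⟨n⟩ : FIG G) ⟶ X)
    (t : Fin n) : (insertHom i g ≫ (iota G).map ψ).2 (i.succAbove t) = ψ.2 t := by
  rw [comp_snd, insertHom_fst, insertHom_snd, Fin.cycleRange_succAbove, iota_map_snd_succ,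
    Pi.mulSingle_eq_of_ne (Fin.succAbove_ne i t), mul_one]

lemma succAboveHom_comp_insertHom_comp (i : Fin (n + 1)) (g : G) (ψ : (⟨n⟩ : FIG G) ⟶ X) :
    succAboveHom i ≫ insertHom i g ≫ (iota G).map ψ = succHom n ≫ (iota G).map ψ := by
  refine hom_ext (fun t => ?_) (fun t => ?_)
  · rw [succAboveHom_comp_fst, insertHom_comp_fst_succAbove, succHom_comp_fst]
  · rw [succAboveHom_comp_snd, insertHom_comp_snd_succAbove, succHom_comp_snd]

lemma succHom_comp_injective :
    Function.Injective fun ψ : (⟨n⟩ : FIG G) ⟶ X => succHom n ≫ (iota G).map ψ := by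
  intro ψ ψ' (h : succHom n ≫ _ = succHom n ≫ _)
  refine hom_ext (fun t => ?_) (fun t => ?_)
  · apply Fin.succ_injective
    rw [← succHom_comp_fst, ← succHom_comp_fst, h]
  · rw [← succHom_comp_snd ψ, ← succHom_comp_snd ψ', h]

lemma insertHom_comp_fst_eq_zero_iff (i : Fin (n + 1)) (g : G) (ψ : (⟨n⟩ : FIG G) ⟶ X)
    (x : Fin (n + 1)) :
    (insertHom i g ≫ (iota G).map ψ).1 x = (0 : Fin (X.n + 1)) ↔ x = i := by
  rw [← insertHom_comp_fst_self i g ψ, (Function.Embedding.injective _).eq_iff]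

lemma insertHom_comp_inj {i j : Fin (n + 1)} {g h : G} {ψ ψ' : (⟨n⟩ : FIG G) ⟶ X}
    (e : insertHom i g ≫ (iota G).map ψ = insertHom j h ≫ (iota G).map ψ') :
    i = j ∧ g = h ∧ ψ = ψ' := by
  obtain rfl : i = j :=
    (insertHom_comp_fst_eq_zero_iff j h ψ' i).mp (by rw [← e, insertHom_comp_fst_self])
  obtain rfl : g = h := by rw [← insertHom_comp_snd_self i g ψ, e, insertHom_comp_snd_self]
  refine ⟨rfl, rfl, succHom_comp_injective ?_⟩
  show succHom n ≫ _ = succHom n ≫ _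
  rw [← succAboveHom_comp_insertHom_comp i g, e, succAboveHom_comp_insertHom_comp]

lemma exists_succHom_comp_eq (φ : (⟨n⟩ : FIG G) ⟶ (iota G).obj X)
    (hφ : ∀ t, φ.1 t ≠ (0 : Fin (X.n + 1))) :
    ∃ ψ : (⟨n⟩ : FIG G) ⟶ X, succHom n ≫ (iota G).map ψ = φ := by
  refine ⟨(⟨⟨fun t => (φ.1 t).pred (hφ t), fun a b h => φ.1.injective ?_⟩, φ.2⟩ :
    (Fin n ↪ Fin X.n) × (Fin n → G)), ?_⟩
  · exact Fin.pred_inj.mp h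
  refine hom_ext (fun t => ?_) (fun t => ?_)
  · exact Fin.succ_pred (φ.1 t) (hφ t)
  · exact succHom_comp_snd _ t

lemma exists_insertHom_comp_eq (φ : (⟨n + 1⟩ : FIG G) ⟶ (iota G).obj X) {i : Fin (n + 1)}
    (hi : φ.1 i = (0 : Fin (X.n + 1))) :
    ∃ ψ : (⟨n⟩ : FIG G) ⟶ X, insertHom i (φ.2 i) ≫ (iota G).map ψ = φ := by
  obtain ⟨ψ, hψ⟩ := exists_succHom_comp_eq (succAboveHom i ≫ φ) fun t h =>
    Fin.succAbove_ne i t (φ.1.injective (h.trans hi.symm))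
  refine ⟨ψ, hom_ext (fun x => ?_) (fun x => ?_)⟩ <;>
    obtain rfl | ⟨t, rfl⟩ := Fin.eq_self_or_eq_succAbove i x
  · rw [insertHom_comp_fst_self, hi]
  · rw [insertHom_comp_fst_succAbove, ← succHom_comp_fst, hψ, succAboveHom_comp_fst]
  · rw [insertHom_comp_snd_self]
  · rw [insertHom_comp_snd_succAbove, ← succHom_comp_snd, hψ, succAboveHom_comp_snd]

lemma succHom_comp_ne_insertHom_comp (ψ : (⟨n + 1⟩ : FIG G) ⟶ X) (i : Fin (n + 1)) (g : G)
    (ψ' : (⟨n⟩ : FIG G) ⟶ X) :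
    succHom (n + 1) ≫ (iota G).map ψ ≠ insertHom i g ≫ (iota G).map ψ' := by
  intro e
  have h := insertHom_comp_fst_self i g ψ'
  rw [← e, succHom_comp_fst] at h
  exact Fin.succ_ne_zero _ h

def shiftSummand (n : ℕ) : Option (Fin (n + 1) × G) → FIG G
  | none => ⟨n + 1⟩
  | some _ => ⟨n⟩

/-- `none` indexes the morphisms missing `0`, `some (i, g)` those sending `i` to `0` with
colour `g`. -/
def shiftGenerator (n : ℕ) :
    ∀ o : Option (Fin (n + 1) × G), (⟨n + 1⟩ : FIG G) ⟶ (iota G).obj (shiftSummand n o)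
  | none => succHom (n + 1)
  | some (i, g) => insertHom i g

theorem bijective_shiftGenerator_comp (n : ℕ) (X : FIG G) :
    Function.Bijective fun x : Σ o, shiftSummand n o ⟶ X =>
      shiftGenerator n x.1 ≫ (iota G).map x.2 := by
  constructor
  · rintro ⟨_ | ⟨i, g⟩, ψ⟩ ⟨_ | ⟨j, h⟩, ψ'⟩ e <;> simp only [shiftGenerator] at e
    · rw [succHom_comp_injective e]
    · exact absurd e (succHom_comp_ne_insertHom_comp ψ j h ψ')
    · exact absurd e.symm (succHom_comp_ne_insertHom_comp ψ' i g ψ)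
    · obtain ⟨rfl, rfl, rfl⟩ := insertHom_comp_inj e
      rfl
  · intro φ
    by_cases h : ∃ i, φ.1 i = (0 : Fin (X.n + 1))
    · obtain ⟨i, hi⟩ := h
      obtain ⟨ψ, hψ⟩ := exists_insertHom_comp_eq φ hi
      exact ⟨⟨some (i, φ.2 i), ψ⟩, hψ⟩
    · obtain ⟨ψ, hψ⟩ := exists_succHom_comp_eq φ (not_exists.mp h)
      exact ⟨⟨none, ψ⟩, hψ⟩

noncomputable def isColimitShiftCofan (n : ℕ) :
    IsColimit (Cofan.mk (iota G ⋙ coyoneda.obj (Opposite.op ⟨n + 1⟩)) fun o =>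
      coyonedaEquiv.symm (shiftGenerator n o)) :=
  isColimitCofanMkOfBijective _ (bijective_shiftGenerator_comp n)

noncomputable def shiftFreeIso (k : Type) [CommRing k] [Finite G] (n : ℕ) :
    (S k G).obj (free k G (n + 1)) ≅
      free k G (n + 1) ⊞ ⨁ fun _ : Fin (n + 1) × G => free k G n :=
  have := (ModuleCat.adj k).leftAdjoint_preservesColimits
  isoBiprodOfIsColimitCofanOption (isColimitCofanMkObjOfIsColimit
    ((Functor.whiskeringRight _ _ _).obj (ModuleCat.free k)) _ _ (isColimitShiftCofan n))

end FIG

/-- **Proposition (ι is a genetic functor for `FI_G`).**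
Let `k` be a commutative ring, `G` a finite group and `C = FI_G`. For every `n ≥ 1`,
the shifted free module `S(kC e_n)` is isomorphic, as a `C`-module, to
`kC e_n ⊕ (kC e_{n-1})^{⊕ n·|G|}`. -/
theorem FIG.shift_of_free (k : Type) [CommRing k] (G : Type) [Group G] [Finite G]
    (n : ℕ) (hn : 1 ≤ n) :
    Nonempty ((FIG.S k G).obj (FIG.free k G n) ≅
      FIG.free k G n ⊞ (⨁ fun _ : Fin (n * Nat.card G) => FIG.free k G (n - 1))) := by
  obtain ⟨m, rfl⟩ : ∃ m, n = m + 1 := ⟨n - 1, by omega⟩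
  rw [Nat.add_sub_cancel]
  let e : Fin (m + 1) × G ≃ Fin ((m + 1) * Nat.card G) :=
    ((Equiv.refl _).prodCongr (Finite.equivFin G)).trans finProdFinEquiv
  exact ⟨FIG.shiftFreeIso k m ≪≫ biprod.mapIso (Iso.refl _)
    (biproduct.whiskerEquiv (g := fun _ => FIG.free k G m) e fun _ => Iso.refl _)⟩
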